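/- arXiv:1001.5127 — 5 statements merged into one kernel-verified Lean document; each statement's English description precedes it below -/
import Mathlib

section
/- With the same hypotheses (S(a,b) = (b^a, a_b) satisfies S_1 S_2 S_1 = S_2 S_1 S_2), for all a, b, c ∈ X one has ((a^b)_{c^{b_a}}) = ((a_c)^{b_{c^a}}). -/
/-- `S × id` on `X × X × X`. -/
def switchL {X : Type*} (S : X × X → X × X) : X × X × X → X × X × X :=
  fun p => ((S (p.1, p.2.1)).1, (S (p.1, p.2.1)).2, p.2.2)

/-- `id × S` on `X × X × X`. -/
def switchR {X : Type*} (S : X × X → X × X) : X × X × X → X × X × X :=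
  fun p => (p.1, S (p.2.1, p.2.2))

section

variable {X : Type*} {up dn : X → X → X} {S : X × X → X × X}

theorem switchL_switchR_switchL_apply (hS : ∀ a b : X, S (a, b) = (up b a, dn a b))
    (a b c : X) :
    switchL S (switchR S (switchL S (a, b, c)))
      = (up (up c (dn a b)) (up b a), dn (up b a) (up c (dn a b)), dn (dn a b) c) := by
  simp only [switchL, switchR, hS]

theorem switchR_switchL_switchR_apply (hS : ∀ a b : X, S (a, b) = (up b a, dn a b))
    (a b c : X) :
    switchR S (switchL S (switchR S (a, b, c)))
      = (up (up c b) a, up (dn b c) (dn a (up c b)), dn (dn a (up c b)) (dn b c)) := by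
  simp only [switchL, switchR, hS]

end

theorem stmt_1 {X : Type*} (up dn : X → X → X)
    (S : X × X → X × X) (hS : ∀ a b : X, S (a, b) = (up b a, dn a b))
    (hYB : ∀ p : X × X × X, switchL S (switchR S (switchL S p))
        = switchR S (switchL S (switchR S p))) :
    ∀ a b c : X, dn (up a b) (up c (dn b a)) = up (dn a c) (dn b (up c a)) := by
  intro a b c
  have h := congrArg (fun p => p.2.1) (hYB (b, a, c))
  simpa only [switchL_switchR_switchL_apply hS, switchR_switchL_switchR_apply hS] using h
end

section
/- Let H be the quaternion algebra over the reals and X a left H-module. Define a^b = j·a + (1+i)·b and a_b = −j·a + (1+i)·b, and S(a,b) = (b^a, a_b). Then S satisfies the set-theoretic Yang–Baxter equation S_1 S_2 S_1 = S_2 S_1 S_2. -/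
def linearSwitch {R X : Type*} [Semiring R] [AddCommMonoid X] [Module R X] (A B C D : R) :
    X × X → X × X :=
  fun p => (A • p.1 + B • p.2, C • p.1 + D • p.2)

theorem linearSwitch_yangBaxter {R X : Type*} [Semiring R] [AddCommMonoid X] [Module R X]
    {A B C D : R}
    (h₁ : A * A + B * A * C = A) (h₂ : A * B + B * A * D = B * A)
    (h₃ : C * A + D * A * C = A * C) (h₄ : C * B + D * A * D = A * D * A + B * C)
    (h₅ : D * B = A * D * B + B * D) (h₆ : C * D = C * D * A + D * C)
    (h₇ : D = C * D * B + D * D) (p : X × X × X) :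
    switchL (linearSwitch A B C D) (switchR (linearSwitch A B C D)
        (switchL (linearSwitch A B C D) p))
      = switchR (linearSwitch A B C D) (switchL (linearSwitch A B C D)
        (switchR (linearSwitch A B C D) p)) := by
  obtain ⟨x, y, z⟩ := p
  simp only [switchL, switchR, linearSwitch, Prod.mk.injEq]
  refine ⟨?_, ?_, ?_⟩ <;> match_scalars <;> simp only [mul_one, ← mul_assoc] <;> assumption

theorem budapestSwitch_yangBaxter {R X : Type*} [Ring R] [AddCommMonoid X] [Module R X]
    {i j : R} (hii : i * i = -1) (hjj : j * j = -1) (hji : j * i = -(i * j)) (p : X × X × X) :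
    switchL (linearSwitch (1 + i) j (-j) (1 + i)) (switchR (linearSwitch (1 + i) j (-j) (1 + i))
        (switchL (linearSwitch (1 + i) j (-j) (1 + i)) p))
      = switchR (linearSwitch (1 + i) j (-j) (1 + i)) (switchL (linearSwitch (1 + i) j (-j) (1 + i))
        (switchR (linearSwitch (1 + i) j (-j) (1 + i)) p)) := by
  have hii' (x : R) : i * (i * x) = -x := by rw [← mul_assoc, hii, neg_one_mul]
  apply linearSwitch_yangBaxter <;>
    simp only [mul_add, add_mul, one_mul, mul_one, mul_neg, neg_mul, neg_neg, mul_assoc,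
      hii, hjj, hji, hii'] <;>
    abel

theorem quaternion_i_mul_i : (⟨0, 1, 0, 0⟩ : Quaternion ℝ) * ⟨0, 1, 0, 0⟩ = -1 := by
  ext <;> simp

theorem quaternion_j_mul_j : (⟨0, 0, 1, 0⟩ : Quaternion ℝ) * ⟨0, 0, 1, 0⟩ = -1 := by
  ext <;> simp

theorem quaternion_j_mul_i :
    (⟨0, 0, 1, 0⟩ : Quaternion ℝ) * ⟨0, 1, 0, 0⟩
      = -((⟨0, 1, 0, 0⟩ : Quaternion ℝ) * ⟨0, 0, 1, 0⟩) := by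
  ext <;> simp

theorem stmt_6 {X : Type*} [AddCommGroup X] [Module (Quaternion ℝ) X]
    (i j : Quaternion ℝ) (hi : i = ⟨0, 1, 0, 0⟩) (hj : j = ⟨0, 0, 1, 0⟩)
    (up dn : X → X → X)
    (hup : ∀ a b : X, up a b = j • a + (1 + i) • b)
    (hdn : ∀ a b : X, dn a b = -(j • a) + (1 + i) • b)
    (S : X × X → X × X) (hS : ∀ a b : X, S (a, b) = (up b a, dn a b)) :
    ∀ p : X × X × X, switchL S (switchR S (switchL S p))
        = switchR S (switchL S (switchR S p)) := by
  have hS_linear : S = linearSwitch (1 + i) j (-j) (1 + i) := by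
    ext ⟨a, b⟩ <;> simp only [hS, hup, hdn, linearSwitch, neg_smul, add_comm]
  subst hS_linear hi hj
  exact budapestSwitch_yangBaxter quaternion_i_mul_i quaternion_j_mul_j quaternion_j_mul_i
end

section
/- Let G be a group and define S : G × G → G × G by S(a,b) = (a²b, b⁻¹a⁻¹b) (the Wada switch). Then S satisfies the set-theoretic Yang–Baxter equation S_1 S_2 S_1 = S_2 S_1 S_2. -/
section WadaSwitch

variable {G : Type*} [Group G] {S : G × G → G × G}

theorem switchL_switchR_switchL_of_wada
    (hS : ∀ a b : G, S (a, b) = (a * a * b, b⁻¹ * a⁻¹ * b)) (a b c : G) :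
    switchL S (switchR S (switchL S (a, b, c)))
      = (a * a * b * b * c, (a * a * b * b * c)⁻¹ * b * c, (b * c)⁻¹ * a * (b * c)) := by
  simp only [switchL, switchR, hS]
  refine Prod.ext ?_ (Prod.ext ?_ ?_) <;> group

theorem switchR_switchL_switchR_of_wada
    (hS : ∀ a b : G, S (a, b) = (a * a * b, b⁻¹ * a⁻¹ * b)) (a b c : G) :
    switchR S (switchL S (switchR S (a, b, c)))
      = (a * a * b * b * c, (a * a * b * b * c)⁻¹ * b * c, (b * c)⁻¹ * a * (b * c)) := by
  simp only [switchL, switchR, hS]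
  refine Prod.ext ?_ (Prod.ext ?_ ?_) <;> group

end WadaSwitch

theorem stmt_7 {G : Type*} [Group G]
    (S : G × G → G × G) (hS : ∀ a b : G, S (a, b) = (a * a * b, b⁻¹ * a⁻¹ * b)) :
    ∀ p : G × G × G, switchL S (switchR S (switchL S p))
        = switchR S (switchL S (switchR S p)) := by
  rintro ⟨a, b, c⟩
  rw [switchL_switchR_switchL_of_wada hS, switchR_switchL_switchR_of_wada hS]
end

section
/- Let G be a group equipped with two commuting automorphisms x, y (i.e. a ℤ²-action, writing a·x and a·y). Define S(a,b) = (b·y, (b·xy)⁻¹(a·x)b). Then S satisfies the set-theoretic Yang–Baxter equation S_1 S_2 S_1 = S_2 S_1 S_2. -/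
namespace SilverWilliams

variable {G : Type*} [Group G]

def switch (φ ψ : G ≃* G) : G × G → G × G :=
  fun p => (ψ p.2, (φ (ψ p.2))⁻¹ * φ p.1 * p.2)

variable {φ ψ : G ≃* G}

theorem switchL_switchR_switchL (hcomm : ∀ a : G, φ (ψ a) = ψ (φ a)) (a b c : G) :
    switchL (switch φ ψ) (switchR (switch φ ψ) (switchL (switch φ ψ) (a, b, c))) =
      (ψ (ψ c), (ψ (ψ (φ c)))⁻¹ * ψ (φ b) * ψ c,
        (ψ (φ c))⁻¹ * (ψ (φ (φ b)))⁻¹ * φ (φ a) * φ b * c) := by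
  simp [switchL, switchR, switch, hcomm, mul_assoc]

theorem switchR_switchL_switchR (hcomm : ∀ a : G, φ (ψ a) = ψ (φ a)) (a b c : G) :
    switchR (switch φ ψ) (switchL (switch φ ψ) (switchR (switch φ ψ) (a, b, c))) =
      (ψ (ψ c), (ψ (ψ (φ c)))⁻¹ * ψ (φ b) * ψ c,
        (ψ (φ c))⁻¹ * (ψ (φ (φ b)))⁻¹ * φ (φ a) * φ b * c) := by
  simp [switchL, switchR, switch, hcomm, mul_assoc]

theorem switch_yangBaxter (hcomm : ∀ a : G, φ (ψ a) = ψ (φ a)) (p : G × G × G) :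
    switchL (switch φ ψ) (switchR (switch φ ψ) (switchL (switch φ ψ) p)) =
      switchR (switch φ ψ) (switchL (switch φ ψ) (switchR (switch φ ψ) p)) := by
  obtain ⟨a, b, c⟩ := p
  rw [switchL_switchR_switchL hcomm, switchR_switchL_switchR hcomm]

end SilverWilliams

theorem stmt_9 {G : Type*} [Group G] (φ ψ : G ≃* G)
    (hcomm : ∀ a : G, φ (ψ a) = ψ (φ a))
    (S : G × G → G × G)
    (hS : ∀ a b : G, S (a, b) = (ψ b, (φ (ψ b))⁻¹ * φ a * b)) :
    ∀ p : G × G × G, switchL S (switchR S (switchL S p))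
        = switchR S (switchL S (switchR S p)) := by
  obtain rfl : S = SilverWilliams.switch φ ψ := funext fun p => hS p.1 p.2
  exact SilverWilliams.switch_yangBaxter hcomm
end

section
/- Let S(a,b) = (b^a, a_b) be a switch on X and T the twist T(a,b) = (b,a). Then the mixed relation T_1 S_2 S_1 = S_2 S_1 T_2 on X³ holds if and only if for all a,b,c ∈ X: a_{b c} = a_{c b} (i.e. (a_b)_c = (a_c)_b) and a^{b_c} = a^b. -/
section

variable {X : Type*}

theorem switchL_twist_apply {T : X × X → X × X} (hT : ∀ a b : X, T (a, b) = (b, a))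
    (a b c : X) : switchL T (a, b, c) = (b, a, c) := by
  simp [switchL, hT]

theorem switchR_twist_apply {T : X × X → X × X} (hT : ∀ a b : X, T (a, b) = (b, a))
    (a b c : X) : switchR T (a, b, c) = (a, c, b) := by
  simp [switchR, hT]

theorem switchR_switchL_apply {up dn : X → X → X} {S : X × X → X × X}
    (hS : ∀ a b : X, S (a, b) = (up b a, dn a b)) (a b c : X) :
    switchR S (switchL S (a, b, c)) = (up b a, up c (dn a b), dn (dn a b) c) := by
  simp [switchL, switchR, hS]

end

theorem stmt_11 {X : Type*} (up dn : X → X → X)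
    (S : X × X → X × X) (hS : ∀ a b : X, S (a, b) = (up b a, dn a b))
    (T : X × X → X × X) (hT : ∀ a b : X, T (a, b) = (b, a)) :
    (∀ p : X × X × X,
        switchL T (switchR S (switchL S p)) = switchR S (switchL S (switchR T p)))
      ↔ ((∀ a b c : X, dn (dn a b) c = dn (dn a c) b) ∧
         (∀ a b c : X, up a (dn b c) = up a b)) := by
  simp only [Prod.forall, switchR_twist_apply hT, switchR_switchL_apply hS,
    switchL_twist_apply hT, Prod.mk.injEq]
  -- at `(a, b, c)`: `c^(a_b) = c^a`, `b^a = b^(a_c)` and `(a_b)_c = (a_c)_b`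
  constructor
  · intro h
    exact ⟨fun a b c => (h a b c).2.2, fun a b c => (h b c a).1⟩
  · rintro ⟨hdn, hup⟩ a b c
    exact ⟨hup c a b, (hup b a c).symm, hdn a b c⟩
end
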